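/- Let d : ℕ → A be admissible and not eventually periodic. Then for every n ∈ ℕ, |F(n)| = n + 1; that is, the follower set sequence of the non-sofic β-shift X_d is exactly {n + 1}. -/
import Mathlib


namespace BetaShift

variable {A : Type*}

/-- The shift map: `(shift x) n = x (n+1)`. -/
def shift (x : ℕ → A) : ℕ → A := fun n => x (n + 1)

/-- Lexicographic order on one-sided sequences: `x = y`, or there is an index `i`
such that `x j = y j` for all `j < i` and `x i < y i`. -/
def SeqLe [LinearOrder A] (x y : ℕ → A) : Prop :=
  x = y ∨ ∃ i, (∀ j, j < i → x j = y j) ∧ x i < y i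

/-- A word `w` occurs in the sequence `x`. -/
def Occurs (w : List A) (x : ℕ → A) : Prop :=
  ∃ i : ℕ, ∀ j : Fin w.length, x (i + j) = w.get j

/-- `Complexity x n` is the number `Φ_n(x)` of distinct words of length `n` occurring in `x`. -/
noncomputable def Complexity (x : ℕ → A) (n : ℕ) : ℕ :=
  Set.ncard {w : List A | w.length = n ∧ Occurs w x}

/-- A sequence is eventually periodic if there are `p ≥ 1` and `N` with
`d (i + p) = d i` for all `i ≥ N`. -/
def EventuallyPeriodic (d : ℕ → A) : Prop :=
  ∃ p, 1 ≤ p ∧ ∃ N, ∀ i, N ≤ i → d (i + p) = d i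

/-- `(d)_k`, the `k`-letter prefix of the sequence `d`, as a word. -/
def prefixWord (d : ℕ → A) (k : ℕ) : List A := List.ofFn (fun i : Fin k => d i)

variable {m : ℕ}

/-- `d` is admissible: every shift of `d` is lexicographically ≤ `d`,
and `d` is not eventually `0`. -/
def Admissible (d : ℕ → Fin m) : Prop :=
  (∀ i, SeqLe (shift^[i] d) d) ∧ ∀ N, ∃ i, N ≤ i ∧ (d i).val ≠ 0

/-- The one-sided β-shift `X_d` determined by the admissible sequence `d`. -/
def XSet (d : ℕ → Fin m) : Set (ℕ → Fin m) :=
  {x | ∀ i, SeqLe (shift^[i] x) d}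

/-- The language of `X_d`: all words occurring in some point of `X_d`. -/
def Lang (d : ℕ → Fin m) : Set (List (Fin m)) :=
  {w | ∃ x ∈ XSet d, Occurs w x}

/-- The follower set of the word `w` in `X_d`. -/
def Fol (d : ℕ → Fin m) (w : List (Fin m)) : Set (List (Fin m)) :=
  {u | w ++ u ∈ Lang d}

/-- The predecessor set of the word `w` in `X_d`. -/
def Pred (d : ℕ → Fin m) (w : List (Fin m)) : Set (List (Fin m)) :=
  {s | s ++ w ∈ Lang d}

/-- The extender set of the word `w` in `X_d`. -/
def Ext (d : ℕ → Fin m) (w : List (Fin m)) : Set (List (Fin m) × List (Fin m)) :=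
  {p | p.1 ++ w ++ p.2 ∈ Lang d}

/-- `|F(n)|`: the number of distinct follower sets of words of length `n` in `X_d`. -/
noncomputable def FolCount (d : ℕ → Fin m) (n : ℕ) : ℕ :=
  Set.ncard {S | ∃ w ∈ Lang d, w.length = n ∧ S = Fol d w}

/-- `|P(n)|`: the number of distinct predecessor sets of words of length `n` in `X_d`. -/
noncomputable def PredCount (d : ℕ → Fin m) (n : ℕ) : ℕ :=
  Set.ncard {S | ∃ w ∈ Lang d, w.length = n ∧ S = Pred d w}

/-- `|E(n)|`: the number of distinct extender sets of words of length `n` in `X_d`. -/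
noncomputable def ExtCount (d : ℕ → Fin m) (n : ℕ) : ℕ :=
  Set.ncard {S | ∃ w ∈ Lang d, w.length = n ∧ S = Ext d w}

/-- The largest `k ≤ n` such that the `k`-letter prefix of `d` is a suffix of `v`
(`k = 0`, the empty prefix, always works). -/
def classIndex (d : ℕ → Fin m) (n : ℕ) (v : List (Fin m)) : ℕ :=
  Nat.findGreatest (fun k => prefixWord d k <:+ v) n

/-- Lexicographic comparison of (equal-length) words: `u = v`, or at the first
index where they differ, `u` takes the smaller value. -/
def WordLe [LinearOrder A] (u v : List A) : Prop :=
  u = v ∨ ∃ i, ∃ (hu : i < u.length) (hv : i < v.length),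
    (∀ j (hju : j < u.length) (hjv : j < v.length), j < i → u.get ⟨j, hju⟩ = v.get ⟨j, hjv⟩) ∧
    u.get ⟨i, hu⟩ < v.get ⟨i, hv⟩



private def pad (w : List (Fin (m+1))) : ℕ → Fin (m+1) := fun n => w.getD n 0

private lemma shift_iter {A : Type*} (x : ℕ → A) (i n : ℕ) : shift^[i] x n = x (i + n) := by
  induction i generalizing n with
  | zero => simp
  | succ i ih =>
    rw [Function.iterate_succ_apply']
    show shift^[i] x (n + 1) = _
    rw [ih]
    congr 1; omega

private lemma pad_lt {w : List (Fin (m+1))} {t : ℕ} (h : t < w.length) : pad w t = w[t] :=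
  List.getD_eq_getElem _ _ h

private lemma pad_ge {w : List (Fin (m+1))} {t : ℕ} (h : w.length ≤ t) : pad w t = 0 :=
  List.getD_eq_default _ _ h

private lemma d0_pos {d : ℕ → Fin (m+1)} (hd : Admissible d) : 0 < d 0 := by
  by_contra h
  have h0 : d 0 = 0 := le_antisymm (not_lt.1 h) (Fin.zero_le _)
  obtain ⟨i, -, hi⟩ := hd.2 0
  have hne : d i ≠ 0 := fun hh => hi (by rw [hh]; rfl)
  rcases hd.1 i with heq | ⟨i₀, ag, st⟩
  · have := congrFun heq 0
    rw [shift_iter, h0] at this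
    exact hne (by simpa using this)
  · rcases Nat.eq_zero_or_pos i₀ with rfl | hpos
    · rw [shift_iter, h0] at st
      exact absurd st (by simp)
    · have := ag 0 hpos
      rw [shift_iter, h0] at this
      exact hne (by simpa using this)

private lemma val_ne_zero_pos {a : Fin (m+1)} (h : a.val ≠ 0) : 0 < a := by
  rcases Nat.eq_zero_or_pos a.val with h0 | h0
  · exact absurd h0 h
  · exact h0

private lemma seqle_zeropad {d : ℕ → Fin (m+1)} (hd : Admissible d) {y z : ℕ → Fin (m+1)} {L : ℕ}
    (hy : SeqLe y d) (h1 : ∀ t, t < L → z t = y t) (h2 : ∀ t, L ≤ t → z t = 0) : SeqLe z d := by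
  classical
  rcases hy with heq | ⟨i, ag, st⟩
  · have hP : ∃ t, L ≤ t ∧ (d t).val ≠ 0 := hd.2 L
    obtain ⟨hL0, hne⟩ := Nat.find_spec hP
    refine Or.inr ⟨Nat.find hP, fun j hj => ?_, ?_⟩
    · rcases lt_or_ge j L with hjL | hjL
      · rw [h1 j hjL, heq]
      · have hz : (d j).val = 0 := by
          by_contra hh
          exact Nat.find_min hP hj ⟨hjL, hh⟩
        rw [h2 j hjL]
        exact (Fin.ext hz.symm : (0 : Fin (m+1)) = d j)
    · rw [h2 _ hL0]
      exact val_ne_zero_pos hne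
  · rcases lt_or_ge i L with hiL | hiL
    · exact Or.inr ⟨i, fun j hj => (h1 j (hj.trans hiL)).trans (ag j hj),
        by rw [h1 i hiL]; exact st⟩
    · by_cases hex : ∃ t, L ≤ t ∧ t < i ∧ (d t).val ≠ 0
      · obtain ⟨hL0, hti, hne⟩ := Nat.find_spec hex
        refine Or.inr ⟨Nat.find hex, fun j hj => ?_, ?_⟩
        · rcases lt_or_ge j L with hjL | hjL
          · rw [h1 j hjL]; exact ag j (lt_of_lt_of_le (hj.trans_le hti.le) le_rfl)
          · have hz : (d j).val = 0 := by
              by_contra hh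
              exact Nat.find_min hex hj ⟨hjL, hj.trans hti, hh⟩
            rw [h2 j hjL]
            exact (Fin.ext hz.symm : (0 : Fin (m+1)) = d j)
        · rw [h2 _ hL0]
          exact val_ne_zero_pos hne
      · push_neg at hex
        refine Or.inr ⟨i, fun j hj => ?_, ?_⟩
        · rcases lt_or_ge j L with hjL | hjL
          · rw [h1 j hjL]; exact ag j hj
          · rw [h2 j hjL]
            have hz : (d j).val = 0 := hex j hjL hj
            exact (Fin.ext hz.symm : (0 : Fin (m+1)) = d j)
        · rw [h2 _ hiL]
          exact lt_of_le_of_lt (Fin.zero_le _) st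


private lemma mem_lang_iff {d : ℕ → Fin (m+1)} (hd : Admissible d) {w : List (Fin (m+1))} :
    w ∈ Lang d ↔ pad w ∈ XSet d := by
  constructor
  · rintro ⟨x, hx, i, hocc⟩
    intro j
    refine seqle_zeropad hd (hx (i + j)) (L := w.length - j) (fun t ht => ?_) (fun t ht => ?_)
    · have htw : j + t < w.length := by omega
      rw [shift_iter, shift_iter, pad_lt (show j + t < w.length from htw)]
      have h2 := hocc ⟨j + t, htw⟩
      simp only [List.get_eq_getElem] at h2
      rw [← h2]
      congr 1; omega
    · rw [shift_iter, pad_ge (by omega)]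
  · intro h
    refine ⟨pad w, h, 0, fun j => ?_⟩
    simp only [List.get_eq_getElem]
    rw [Nat.zero_add, pad_lt j.isLt]

private lemma suffix_iff {d : ℕ → Fin (m+1)} {k : ℕ} {w : List (Fin (m+1))} (hk : k ≤ w.length) :
    prefixWord d k <:+ w ↔ ∀ t, t < k → pad w (w.length - k + t) = d t := by
  have hplen : (prefixWord d k).length = k := by simp [prefixWord]
  constructor
  · rintro ⟨s, rfl⟩ t ht
    have hs : s.length = (s ++ prefixWord d k).length - k := by
      simp [hplen]
    rw [show (s ++ prefixWord d k).length - k + t = s.length + t by omega, pad,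
      List.getD_append_right _ _ _ _ (by omega)]
    rw [show s.length + t - s.length = t by omega, List.getD_eq_getElem _ _ (by omega)]
    simp [prefixWord]
  · intro h
    refine ⟨w.take (w.length - k), ?_⟩
    have hdrop : w.drop (w.length - k) = prefixWord d k := by
      apply List.ext_getElem
      · simp [hplen]; omega
      · intro i h1 h2
        have hik : i < k := by rwa [hplen] at h2
        have := h i hik
        rw [pad, List.getD_eq_getElem _ _ (by omega)] at this
        simp only [prefixWord, List.getElem_ofFn]
        rw [List.getElem_drop]
        exact this
    rw [← hdrop, List.take_append_drop]

private lemma lang_cases {d : ℕ → Fin (m+1)} {w : List (Fin (m+1))} {i : ℕ}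
    (hw : SeqLe (shift^[i] (pad w)) d) :
    (∃ i₀, i₀ < w.length - i ∧ (∀ t, t < i₀ → pad w (i + t) = d t) ∧ pad w (i + i₀) < d i₀) ∨
      (∀ t, t < w.length - i → pad w (i + t) = d t) := by
  rcases hw with heq | ⟨i₀, ag, st⟩
  · right; intro t ht; have := congrFun heq t; rwa [shift_iter] at this
  · rcases lt_or_ge i₀ (w.length - i) with h | h
    · left
      exact ⟨i₀, h, fun t ht => by have := ag t ht; rwa [shift_iter] at this,
        by rwa [shift_iter] at st⟩
    · right; intro t ht; have := ag t (by omega); rwa [shift_iter] at this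


private lemma fol_eq_prefix {d : ℕ → Fin (m+1)} (hd : Admissible d) {w : List (Fin (m+1))} {n : ℕ}
    (hw : w ∈ Lang d) (hn : w.length = n) :
    Fol d w = Fol d (prefixWord d (classIndex d n w)) := by
  subst hn
  set n := w.length with hnw
  set k := classIndex d n w with hk
  have hkn : k ≤ n := Nat.findGreatest_le n
  have hkdef : Nat.findGreatest (fun k => prefixWord d k <:+ w) n = k := rfl
  have hP : prefixWord d k <:+ w := by
    rw [← hkdef]
    exact Nat.findGreatest_spec (P := fun k => prefixWord d k <:+ w) (Nat.zero_le n)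
      (show prefixWord d 0 <:+ w by simp [prefixWord])
  have hsuf : ∀ t, t < k → pad w (n - k + t) = d t := (suffix_iff hkn).1 hP
  have hplen : (prefixWord d k).length = k := by simp [prefixWord]
  have hw' : pad w ∈ XSet d := (mem_lang_iff hd).1 hw
  ext u
  have halign : ∀ t, pad (w ++ u) (n - k + t) = pad (prefixWord d k ++ u) t := by
    intro t
    rcases lt_or_ge t k with htk | htk
    · rw [pad, List.getD_append _ _ _ _ (by omega), pad, List.getD_append _ _ _ _ (by omega)]
      show pad w (n - k + t) = pad (prefixWord d k) t
      rw [hsuf t htk, pad_lt (by omega)]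
      simp [prefixWord]
    · rcases lt_or_ge t (k + u.length) with htu | htu
      · rw [pad, List.getD_append_right _ _ _ _ (by omega),
          pad, List.getD_append_right _ _ _ _ (by omega)]
        rw [hplen]
        congr 1
        omega
      · rw [pad_ge (by simp; omega), pad_ge (by simp [hplen]; omega)]
  simp only [Fol, Set.mem_setOf_eq, mem_lang_iff hd]
  constructor
  · intro hu i
    have : shift^[i] (pad (prefixWord d k ++ u)) = shift^[n - k + i] (pad (w ++ u)) := by
      funext t
      rw [shift_iter, shift_iter, ← halign]
      congr 1; omega
    rw [this]
    exact hu _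
  · intro hu i
    rcases lt_or_ge i (n - k) with hi | hi
    · -- need SeqLe (shift^[i] (pad (w ++ u))) d
      rcases lang_cases (hw' i) with ⟨i₀, hlt, ag, st⟩ | hall
      · refine Or.inr ⟨i₀, fun t ht => ?_, ?_⟩
        · rw [shift_iter, pad, List.getD_append _ _ _ _ (by omega)]
          exact ag t ht
        · rw [shift_iter, pad, List.getD_append _ _ _ _ (by omega)]
          exact st
      · exfalso
        have hsuf2 : prefixWord d (n - i) <:+ w := by
          rw [suffix_iff (by omega)]
          intro t ht
          rw [show n - (n - i) + t = i + t by omega]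
          exact hall t ht
        have := Nat.le_findGreatest (P := fun k => prefixWord d k <:+ w) (by omega : n - i ≤ n) hsuf2
        rw [hkdef] at this
        omega
    · have : shift^[i] (pad (w ++ u)) = shift^[i - (n - k)] (pad (prefixWord d k ++ u)) := by
        funext t
        rw [shift_iter, shift_iter, ← halign (i - (n - k) + t)]
        congr 1; omega
      rw [this]
      exact hu _


private lemma wk_spec {d : ℕ → Fin (m+1)} (hd : Admissible d) {n k : ℕ} (hk : k ≤ n) :
    (List.replicate (n - k) (0 : Fin (m+1)) ++ prefixWord d k) ∈ Lang d ∧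
    (List.replicate (n - k) (0 : Fin (m+1)) ++ prefixWord d k).length = n ∧
    classIndex d n (List.replicate (n - k) (0 : Fin (m+1)) ++ prefixWord d k) = k := by
  classical
  set wK := List.replicate (n - k) (0 : Fin (m+1)) ++ prefixWord d k with hwK
  have hplen : (prefixWord d k).length = k := by simp [prefixWord]
  have hlen : wK.length = n := by simp [hwK, hplen]; omega
  have pvals1 : ∀ t, t < n - k → pad wK t = 0 := by
    intro t ht
    rw [pad, hwK, List.getD_append _ _ _ _ (by simp; omega)]
    show pad (List.replicate (n-k) (0 : Fin (m+1))) t = 0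
    rw [pad_lt (by simp; omega)]
    simp
  have pvals2 : ∀ t, n - k ≤ t → t < n → pad wK t = d (t - (n - k)) := by
    intro t h1 h2
    rw [pad, hwK, List.getD_append_right _ _ _ _ (by simp; omega)]
    simp only [List.length_replicate]
    rw [List.getD_eq_getElem _ _ (by rw [hplen]; omega)]
    simp [prefixWord]
  have pvals3 : ∀ t, n ≤ t → pad wK t = 0 := fun t ht => pad_ge (by omega)
  refine ⟨?_, hlen, ?_⟩
  · rw [mem_lang_iff hd]
    intro i
    rcases lt_or_ge i (n - k) with hi | hi
    · refine Or.inr ⟨0, fun j hj => absurd hj (by omega), ?_⟩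
      rw [shift_iter]
      have : pad wK i = 0 := pvals1 i hi
      show pad wK (i + 0) < d 0
      rw [show i + 0 = i from rfl, this]
      exact d0_pos hd
    · refine seqle_zeropad hd (hd.1 (i - (n - k))) (L := n - i) (fun t ht => ?_) (fun t ht => ?_)
      · rw [shift_iter, shift_iter, pvals2 (i + t) (by omega) (by omega)]
        congr 1; omega
      · rw [shift_iter]
        rcases lt_or_ge (i + t) n with h | h
        · exact pvals2 (i + t) (by omega) h ▸ (by
            exfalso; omega)
        · exact pvals3 _ h
  · have : Nat.findGreatest (fun k' => prefixWord d k' <:+ wK) n = k := by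
      rw [Nat.findGreatest_eq_iff]
      refine ⟨hk, fun _ => List.suffix_append _ _, fun j hj1 hj2 hsuf => ?_⟩
      have h0 := (suffix_iff (by omega)).1 hsuf 0 (by omega)
      rw [hlen] at h0
      have h0' : pad wK (n - j) = d 0 := by rw [show n - j = n - j + 0 from rfl]; exact h0
      rw [pvals1 (n - j) (by omega)] at h0'
      exact absurd h0'.symm (d0_pos hd).ne'
    exact this


private lemma prefix_word_mem {d : ℕ → Fin (m+1)} (hd : Admissible d) (a j : ℕ) :
    (List.ofFn (fun t : Fin (j+1) => d (a + t))) ∈ Fol d (prefixWord d a) := by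
  refine ⟨d, hd.1, 0, fun t => ?_⟩
  simp only [List.get_eq_getElem, Nat.zero_add]
  have ht := t.isLt
  simp only [List.length_append, List.length_ofFn] at ht
  have hplen : (prefixWord d a).length = a := by simp [prefixWord]
  rcases lt_or_ge (t : ℕ) a with h | h
  · rw [List.getElem_append_left (by omega)]
    simp [prefixWord]
  · rw [List.getElem_append_right (by omega)]
    simp only [hplen, List.getElem_ofFn]
    congr 1; omega


private lemma notMem_fol {d : ℕ → Fin (m+1)} (hd : Admissible d) {a b j : ℕ}
    (hmin : ∀ t, t < j → d (a + t) = d (b + t)) (hba : d (b + j) < d (a + j)) :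
    (List.ofFn (fun t : Fin (j+1) => d (a + t))) ∉ Fol d (prefixWord d b) := by
  rintro ⟨x, hx, i, hocc⟩
  have hplen : (prefixWord d b).length = b := by simp [prefixWord]
  set c := b + j with hc
  have hlist : (prefixWord d b ++ List.ofFn (fun t : Fin (j+1) => d (a + t))).length = c + 1 := by
    simp [hplen, hc]; omega
  have hval : ∀ t (ht : t < c + 1), x (i + t) =
      (prefixWord d b ++ List.ofFn (fun t : Fin (j+1) => d (a + t)))[t]'(by omega) := by
    intro t ht
    have := hocc ⟨t, by omega⟩
    simpa using this
  have hagree : ∀ t, t < c → x (i + t) = d t := by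
    intro t ht
    rw [hval t (by omega)]
    rcases lt_or_ge t b with h | h
    · rw [List.getElem_append_left (by omega)]
      simp [prefixWord]
    · rw [List.getElem_append_right (by omega)]
      simp only [hplen, List.getElem_ofFn]
      rw [hmin (t - b) (by omega)]
      congr 1; omega
  have hat : x (i + c) = d (a + j) := by
    rw [hval c (by omega), List.getElem_append_right (by omega)]
    simp only [hplen, List.getElem_ofFn]
    congr 1; omega
  rcases hx i with heq | ⟨i₀, ag, st⟩
  · have := congrFun heq c
    rw [shift_iter] at this
    rw [hat] at this
    exact absurd this hba.ne'
  · rcases lt_trichotomy i₀ c with h | rfl | h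
    · have h1 := st
      rw [shift_iter, hagree i₀ h] at h1
      exact lt_irrefl _ h1
    · rw [shift_iter, hat] at st
      exact absurd st (asymm hba)
    · have h1 := ag c h
      rw [shift_iter, hat] at h1
      exact absurd h1 hba.ne'

private lemma fol_prefix_inj {d : ℕ → Fin (m+1)} (hd : Admissible d)
    (hnp : ¬ EventuallyPeriodic d) {k k' : ℕ} (hlt : k < k')
    (heq : Fol d (prefixWord d k) = Fol d (prefixWord d k')) : False := by
  classical
  have hdiff : ∃ j, d (k' + j) ≠ d (k + j) := by
    by_contra h
    push_neg at h
    refine hnp ⟨k' - k, by omega, k, fun i hi => ?_⟩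
    have := h (i - k)
    rw [show k + (i - k) = i by omega, show k' + (i - k) = i + (k' - k) by omega] at this
    exact this
  set j := Nat.find hdiff with hj
  have hne := Nat.find_spec hdiff
  have hmin : ∀ t, t < j → d (k' + t) = d (k + t) := by
    intro t ht
    by_contra hh
    exact Nat.find_min hdiff ht hh
  rcases lt_trichotomy (d (k + j)) (d (k' + j)) with h | h | h
  · have hmem := prefix_word_mem hd k' j
    rw [← heq] at hmem
    exact notMem_fol hd (a := k') (b := k) hmin h hmem
  · exact hne h.symm
  · have hmem := prefix_word_mem hd k j
    rw [heq] at hmem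
    exact notMem_fol hd (a := k) (b := k') (fun t ht => (hmin t ht).symm) h hmem




end BetaShift

open BetaShift

/-- for non-sofic β-shifts, `|F(n)| = n + 1` for every `n`. -/
theorem stmt4 (m : ℕ) (hm : 1 ≤ m) (d : ℕ → Fin m) (hd : Admissible d)
    (hnp : ¬ EventuallyPeriodic d) (n : ℕ) :
    FolCount d n = n + 1 := by
  obtain ⟨m, rfl⟩ := Nat.exists_eq_succ_of_ne_zero (by omega : m ≠ 0)
  have key : {S | ∃ w ∈ Lang d, w.length = n ∧ S = Fol d w}
      = (fun k => Fol d (prefixWord d k)) '' (Set.Iic n) := by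
    ext S
    constructor
    · rintro ⟨w, hw, hlen, rfl⟩
      refine ⟨classIndex d n w, ?_, (fol_eq_prefix hd hw hlen).symm⟩
      exact Nat.findGreatest_le n
    · rintro ⟨k, hk, rfl⟩
      obtain ⟨h1, h2, h3⟩ := wk_spec hd (hk : k ≤ n)
      exact ⟨_, h1, h2, by rw [fol_eq_prefix hd h1 h2, h3]⟩
  have hinj : Set.InjOn (fun k => Fol d (prefixWord d k)) (Set.Iic n) := by
    intro a _ b _ hab
    by_contra hne
    rcases lt_or_gt_of_ne hne with h | h
    · exact fol_prefix_inj hd hnp h hab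
    · exact fol_prefix_inj hd hnp h hab.symm
  rw [FolCount, key, Set.ncard_image_of_injOn hinj,
    show (Set.Iic n) = ↑(Finset.Iic n) by simp, Set.ncard_coe_finset, Nat.card_Iic]
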